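/- arXiv:1901.03469 — 4 statements merged into one kernel-verified Lean document; each statement's English description precedes it below -/
import Mathlib

section
/- Let G be a complex semisimple Lie group and P, Q ⊆ G parabolic subgroups with P ∩ Q parabolic. If there exists a proper parabolic subgroup R ⊊ G containing both P and Q, then G/P is not Q-cycle-connected; in fact every Q-cycle is contracted to a single point by the G-equivariant projection G/P → G/R. -/
open scoped Pointwise

/-- Surrogate definition of a parabolic subgroup of a (complex semisimple Lie) group:
a closed subgroup with compact (projective) quotient. -/
def IsParabolic (G : Type*) [Group G] [TopologicalSpace G] (H : Subgroup G) : Prop :=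
  IsClosed (H : Set G) ∧ CompactSpace (G ⧸ H)

/-- A `Q`-cycle in `G ⧸ P`: a `G`-translate of the `Q`-orbit of the base point `x₀ = 1·P`. -/
def IsQCycle (G : Type*) [Group G] (P Q : Subgroup G) (C : Set (G ⧸ P)) : Prop :=
  ∃ g : G, C = g • (MulAction.orbit Q ((1 : G) : G ⧸ P))

/-- A chain of `n + 1` `Q`-cycles connecting `x` to `y`: consecutive cycles intersect,
`x` lies in the first one and `y` in the last one. -/
def QCycleChain (G : Type*) [Group G] (P Q : Subgroup G) (n : ℕ) (x y : G ⧸ P) : Prop :=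
  ∃ C : Fin (n + 1) → Set (G ⧸ P),
    (∀ i, IsQCycle G P Q (C i)) ∧
    (∀ i : Fin n, (C i.castSucc ∩ C i.succ).Nonempty) ∧
    x ∈ C 0 ∧ y ∈ C (Fin.last n)

/-- `G ⧸ P` is `Q`-cycle-connected if any two points are joined by a finite chain of
`Q`-cycles. -/
def QCycleConnected (G : Type*) [Group G] (P Q : Subgroup G) : Prop :=
  ∀ x y : G ⧸ P, ∃ n : ℕ, QCycleChain G P Q n x y

open Subgroup

section

variable {G : Type*} [Group G] {P Q R : Subgroup G}

theorem IsQCycle.exists_forall_quotientMapOfLE_eq (hPR : P ≤ R) (hQR : Q ≤ R)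
    {C : Set (G ⧸ P)} (hC : IsQCycle G P Q C) :
    ∃ z : G ⧸ R, ∀ x ∈ C, quotientMapOfLE hPR x = z := by
  obtain ⟨g, rfl⟩ := hC
  refine ⟨g, ?_⟩
  rintro _ ⟨_, ⟨q, rfl⟩, rfl⟩
  change ((g * (q * 1) : G) : G ⧸ R) = g
  rw [QuotientGroup.eq]
  simpa using R.inv_mem (hQR q.2)

theorem QCycleChain.quotientMapOfLE_eq (hPR : P ≤ R) (hQR : Q ≤ R) {n : ℕ} {x y : G ⧸ P}
    (hxy : QCycleChain G P Q n x y) : quotientMapOfLE hPR x = quotientMapOfLE hPR y := by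
  obtain ⟨C, hcyc, hlink, hx, hy⟩ := hxy
  choose z hz using fun i => (hcyc i).exists_forall_quotientMapOfLE_eq hPR hQR
  have hz_const : ∀ i, z i = z 0 := by
    refine Fin.induction rfl fun i ih => ?_
    obtain ⟨a, ha, ha'⟩ := hlink i
    rw [← ih, ← hz _ a ha, hz _ a ha']
  rw [hz 0 x hx, hz _ y hy, hz_const (Fin.last n)]

theorem not_qCycleConnected_of_le (hRtop : R ≠ ⊤) (hPR : P ≤ R) (hQR : Q ≤ R) :
    ¬ QCycleConnected G P Q := by
  intro hconn
  obtain ⟨g, hg⟩ : ∃ g, g ∉ R := by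
    by_contra! h
    exact hRtop (eq_top_iff' R |>.2 h)
  obtain ⟨n, hchain⟩ := hconn ((1 : G) : G ⧸ P) g
  have h1g : ((1 : G) : G ⧸ R) = g := hchain.quotientMapOfLE_eq hPR hQR
  rw [QuotientGroup.eq] at h1g
  exact hg (by simpa using h1g)

end

theorem stmt1_general (G : Type*) [Group G]
    (P Q R : Subgroup G)
    (hRtop : R ≠ ⊤) (hPR : P ≤ R) (hQR : Q ≤ R) :
    ¬ QCycleConnected G P Q ∧
      ∀ C : Set (G ⧸ P), IsQCycle G P Q C →
        ∃ z : G ⧸ R, ∀ g : G, (QuotientGroup.mk g : G ⧸ P) ∈ C →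
          (QuotientGroup.mk g : G ⧸ R) = z := by
  refine ⟨not_qCycleConnected_of_le hRtop hPR hQR, fun C hC => ?_⟩
  obtain ⟨z, hz⟩ := hC.exists_forall_quotientMapOfLE_eq hPR hQR
  exact ⟨z, fun g hg => hz _ hg⟩

/-- If there exists a proper parabolic subgroup `R ⊊ G` containing both `P` and `Q`, then
`G ⧸ P` is not `Q`-cycle-connected; in fact every `Q`-cycle is contracted to a single point
by the `G`-equivariant projection `G ⧸ P → G ⧸ R`. -/
theorem stmt1 (G : Type*) [Group G] [TopologicalSpace G] [IsTopologicalGroup G]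
    (P Q R : Subgroup G)
    (hP : IsParabolic G P) (hQ : IsParabolic G Q) (hPQ : IsParabolic G (P ⊓ Q))
    (hR : IsParabolic G R) (hRtop : R ≠ ⊤) (hPR : P ≤ R) (hQR : Q ≤ R) :
    ¬ QCycleConnected G P Q ∧
      ∀ C : Set (G ⧸ P), IsQCycle G P Q C →
        ∃ z : G ⧸ R, ∀ g : G, (QuotientGroup.mk g : G ⧸ P) ∈ C →
          (QuotientGroup.mk g : G ⧸ R) = z :=
  stmt1_general G P Q R hRtop hPR hQR
end

section
/- Let G be a complex semisimple Lie group, P, Q parabolic subgroups with P ∩ Q parabolic, and x₀ ∈ G/P the base point. If G/P is Q-cycle-connected, then there exists a positive integer N such that every point of G/P can be connected to x₀ by a chain of Q-cycles of length at most N. -/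
open scoped Pointwise

/-! The endpoints of chains of `n` `Q`-cycles from the base point form the image in `G ⧸ P` of
`P (Q P)ⁿ ⊆ G`. These images exhaust `G ⧸ P` and are closed: compactness of `G ⧸ (P ⊓ Q)` makes
`S Q` closed for every closed `S` with `S P = S`. By Baire one of them, for some `m`, has nonempty
interior `U`. The open sets `P (Q P)ᴺ • U` increase with `N` and cover the compact space `G ⧸ P`,
so one of them is everything; it lies in the image of `P (Q P)ᴺ P (Q P)ᵐ = P (Q P)ᴺ⁺ᵐ`. -/

open Set

section Chains

variable {G : Type*} [Group G] (P Q : Subgroup G)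

theorem qCycleChain_zero_iff {x y : G ⧸ P} :
    QCycleChain G P Q 0 x y ↔ ∃ C, IsQCycle G P Q C ∧ x ∈ C ∧ y ∈ C := by
  constructor
  · rintro ⟨C, hC, -, hx, hy⟩
    exact ⟨C 0, hC 0, hx, hy⟩
  · rintro ⟨C, hC, hx, hy⟩
    exact ⟨fun _ => C, fun _ => hC, fun i => i.elim0, hx, hy⟩

theorem qCycleChain_succ_iff {n : ℕ} {x y : G ⧸ P} :
    QCycleChain G P Q (n + 1) x y ↔
      ∃ z, QCycleChain G P Q n x z ∧ ∃ C, IsQCycle G P Q C ∧ z ∈ C ∧ y ∈ C := by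
  constructor
  · rintro ⟨C, hC, hmeet, hx, hy⟩
    obtain ⟨z, hz, hz'⟩ := hmeet (Fin.last n)
    refine ⟨z, ⟨Fin.init C, fun _ => hC _, fun i => hmeet i.castSucc, hx, hz⟩,
      C (Fin.last (n + 1)), hC _, hz', hy⟩
  · rintro ⟨z, ⟨C, hC, hmeet, hx, hz⟩, D, hD, hzD, hy⟩
    refine ⟨Fin.snoc C D, fun i => ?_, fun i => ?_, ?_, by simpa using hy⟩
    · induction i using Fin.lastCases with
      | last => simpa using hD
      | cast i => simpa using hC i
    · induction i using Fin.lastCases with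
      | last => exact ⟨z, by simpa using hz, by simpa using hzD⟩
      | cast i => simpa [← Fin.castSucc_succ] using hmeet i
    · rw [← Fin.castSucc_zero, Fin.snoc_castSucc]
      exact hx

end Chains

section Cosets

variable {G : Type*} [Group G] (H : Subgroup G)

theorem mul_coe_eq_of_le {S : Set G} {L K : Subgroup G} (hLK : L ≤ K)
    (hSK : S * (K : Set G) = S) : S * (L : Set G) = S :=
  subset_antisymm ((mul_subset_mul_left hLK).trans hSK.le) (subset_mul_left S L.one_mem)

theorem smul_image_mk (S T : Set G) :
    S • (QuotientGroup.mk '' T : Set (G ⧸ H)) = QuotientGroup.mk '' (S * T) := by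
  rw [← image2_smul, image2_image_right, ← image2_mul, image_image2]
  rfl

theorem image_mk_mul_coe (T : Set G) :
    (QuotientGroup.mk '' (T * H) : Set (G ⧸ H)) = QuotientGroup.mk '' T := by
  rw [← QuotientGroup.preimage_image_mk_eq_mul, image_preimage_eq _ QuotientGroup.mk_surjective]

end Cosets

section Towers

variable {G : Type*} [Group G] (P Q : Subgroup G)

theorem isQCycle_iff {C : Set (G ⧸ P)} :
    IsQCycle G P Q C ↔ ∃ g : G, C = QuotientGroup.mk '' ({g} * (Q : Set G)) := by
  have horbit : MulAction.orbit Q ((1 : G) : G ⧸ P) = QuotientGroup.mk '' (Q : Set G) := by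
    ext x
    constructor
    · rintro ⟨q, rfl⟩
      exact ⟨q, q.2, congrArg QuotientGroup.mk (mul_one _).symm⟩
    · rintro ⟨q, hq, rfl⟩
      exact ⟨⟨q, hq⟩, congrArg QuotientGroup.mk (mul_one q)⟩
  simp_rw [IsQCycle, horbit, ← singleton_smul, smul_image_mk]

theorem exists_qCycle_iff {S : Set G} (hS : S * (P : Set G) = S) {y : G ⧸ P} :
    (∃ z ∈ QuotientGroup.mk '' S, ∃ C, IsQCycle G P Q C ∧ z ∈ C ∧ y ∈ C) ↔
      y ∈ QuotientGroup.mk '' (S * (Q : Set G) * (P : Set G)) := by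
  simp_rw [isQCycle_iff, image_mk_mul_coe]
  constructor
  · rintro ⟨_, ⟨s, hs, rfl⟩, _, ⟨g, rfl⟩, hz, hy⟩
    rw [singleton_mul, image_image] at hz hy
    obtain ⟨q, hq, hgq⟩ := hz
    obtain ⟨q', hq', rfl⟩ := hy
    have hp : (g * q)⁻¹ * s ∈ P := QuotientGroup.eq.mp hgq
    refine ⟨g * q', ⟨s * ((g * q)⁻¹ * s)⁻¹, ?_, q⁻¹ * q', Q.mul_mem (Q.inv_mem hq) hq', ?_⟩, rfl⟩
    · exact hS ▸ mul_mem_mul hs (P.inv_mem hp)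
    · group
  · rintro ⟨_, ⟨s, hs, q, hq, rfl⟩, rfl⟩
    refine ⟨s, ⟨s, hs, rfl⟩, _, ⟨s, rfl⟩, ?_, ?_⟩ <;> rw [singleton_mul, image_image]
    exacts [⟨1, Q.one_mem, congrArg _ (mul_one s)⟩, ⟨q, hq, rfl⟩]

/-- `P (Q P)ⁿ`; its image in `G ⧸ P` is the image of the evaluation map on `Q`-towers of
length `n`. -/
def towerSet : ℕ → Set G
  | 0 => P
  | n + 1 => towerSet n * Q * P

theorem towerSet_mul_coe (n : ℕ) : towerSet P Q n * P = towerSet P Q n := by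
  cases n with
  | zero => exact coe_mul_coe P
  | succ n => rw [towerSet, mul_assoc _ (P : Set G), coe_mul_coe]

theorem towerSet_mono : Monotone (towerSet P Q) :=
  monotone_nat_of_le_succ fun _ =>
    (subset_mul_left _ Q.one_mem).trans (subset_mul_left _ P.one_mem)

theorem towerSet_mul_towerSet (n m : ℕ) :
    towerSet P Q n * towerSet P Q m = towerSet P Q (n + m) := by
  induction m with
  | zero => exact towerSet_mul_coe P Q n
  | succ m ih => rw [← add_assoc, towerSet, towerSet, ← mul_assoc, ← mul_assoc, ih]

theorem mk_mem_image_towerSet {n : ℕ} {g : G} :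
    (g : G ⧸ P) ∈ QuotientGroup.mk '' towerSet P Q n ↔ g ∈ towerSet P Q n := by
  rw [← mem_preimage, QuotientGroup.preimage_image_mk_eq_mul, towerSet_mul_coe]

theorem qCycleChain_iff_mem_image_towerSet (n : ℕ) (y : G ⧸ P) :
    QCycleChain G P Q n ((1 : G) : G ⧸ P) y ↔ y ∈ QuotientGroup.mk '' towerSet P Q (n + 1) := by
  induction n generalizing y with
  | zero =>
    have hbase : (QuotientGroup.mk '' towerSet P Q 0 : Set (G ⧸ P)) = {((1 : G) : G ⧸ P)} := by
      rw [towerSet, ← one_mul (P : Set G), ← singleton_one, image_mk_mul_coe, image_singleton]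
    rw [qCycleChain_zero_iff, towerSet, ← exists_qCycle_iff P Q (towerSet_mul_coe P Q 0), hbase]
    simp only [mem_singleton_iff, exists_eq_left]
  | succ n ih =>
    simp_rw [qCycleChain_succ_iff, ih]
    exact exists_qCycle_iff P Q (towerSet_mul_coe P Q _)

theorem iUnion_towerSet_eq_univ (hconn : QCycleConnected G P Q) :
    ⋃ n, towerSet P Q n = univ := by
  refine eq_univ_of_forall fun g => mem_iUnion.mpr ?_
  obtain ⟨n, hn⟩ := hconn ((1 : G) : G ⧸ P) g
  exact ⟨n + 1,
    (mk_mem_image_towerSet P Q).mp ((qCycleChain_iff_mem_image_towerSet P Q n _).mp hn)⟩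

end Towers

section Topology

variable {G : Type*} [Group G] [TopologicalSpace G]

theorem isClosed_image_mk_iff {H : Subgroup G} {S : Set G} (hSH : S * (H : Set G) = S) :
    IsClosed (QuotientGroup.mk '' S : Set (G ⧸ H)) ↔ IsClosed S := by
  rw [← (QuotientGroup.isQuotientMap_mk H).isClosed_preimage,
    QuotientGroup.preimage_image_mk_eq_mul, hSH]

variable [IsTopologicalGroup G]

theorem isClosed_mul_coe_of_le {L K : Subgroup G} (hLK : L ≤ K) [CompactSpace (G ⧸ L)]
    [IsClosed (K : Set G)] {S : Set G} (hS : IsClosed S) (hSL : S * (L : Set G) = S) :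
    IsClosed (S * (K : Set G)) := by
  have hL : IsClosed (QuotientGroup.mk '' S : Set (G ⧸ L)) := (isClosed_image_mk_iff hSL).mpr hS
  have hK : IsCompact (QuotientGroup.mk '' S : Set (G ⧸ K)) := by
    have hcont : Continuous (Subgroup.quotientMapOfLE hLK) :=
      (QuotientGroup.isQuotientMap_mk L).continuous_iff.mpr QuotientGroup.continuous_mk
    simpa only [image_image, Subgroup.quotientMapOfLE_apply_mk] using hL.isCompact.image hcont
  rw [← QuotientGroup.preimage_image_mk_eq_mul]
  exact hK.isClosed.preimage QuotientGroup.continuous_mk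

variable (P Q : Subgroup G) [IsClosed (P : Set G)] [IsClosed (Q : Set G)]
  [CompactSpace (G ⧸ (P ⊓ Q))]

theorem isClosed_towerSet (n : ℕ) : IsClosed (towerSet P Q n) := by
  induction n with
  | zero => exact ‹IsClosed (P : Set G)›
  | succ n ih =>
    have hQ : IsClosed (towerSet P Q n * (Q : Set G)) :=
      isClosed_mul_coe_of_le (L := P ⊓ Q) inf_le_right ih
        (mul_coe_eq_of_le inf_le_left (towerSet_mul_coe P Q n))
    refine isClosed_mul_coe_of_le (L := P ⊓ Q) inf_le_left hQ (mul_coe_eq_of_le inf_le_right ?_)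
    rw [mul_assoc, coe_mul_coe]

theorem isClosed_image_towerSet (n : ℕ) :
    IsClosed (QuotientGroup.mk '' towerSet P Q n : Set (G ⧸ P)) :=
  (isClosed_image_mk_iff (towerSet_mul_coe P Q n)).mpr (isClosed_towerSet P Q n)

end Topology

theorem exists_smul_eq_univ_of_monotone {G X : Type*} [Group G] [MulAction G X]
    [MulAction.IsPretransitive G X] [TopologicalSpace X] [CompactSpace X]
    [ContinuousConstSMul G X] {B : ℕ → Set G} (hB : Monotone B) (hcover : ⋃ n, B n = univ)
    {U : Set X} (hU : IsOpen U) (hne : U.Nonempty) : ∃ N, B N • U = univ := by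
  obtain ⟨u, hu⟩ := hne
  have htranslates : univ ⊆ ⋃ n, B n • U := fun x _ => by
    obtain ⟨g, rfl⟩ := MulAction.exists_smul_eq G u x
    obtain ⟨n, hn⟩ := mem_iUnion.mp (hcover ▸ mem_univ g)
    exact mem_iUnion.mpr ⟨n, smul_mem_smul hn hu⟩
  obtain ⟨N, hN⟩ := isCompact_univ.elim_directed_cover _ (fun n => hU.smul_left) htranslates
    (Monotone.directed_le fun _ _ h => smul_subset_smul_right (hB h))
  exact ⟨N, univ_subset_iff.mp hN⟩

/-- If `G ⧸ P` is `Q`-cycle-connected, then there is a uniform bound `N` such that every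
point of `G ⧸ P` is connected to the base point `x₀ = 1·P` by a chain of `Q`-cycles of
length at most `N`. -/
theorem stmt2 (G : Type*) [Group G] [TopologicalSpace G] [IsTopologicalGroup G]
    (P Q : Subgroup G)
    (hP : IsParabolic G P) (hQ : IsParabolic G Q) (hPQ : IsParabolic G (P ⊓ Q))
    (hconn : QCycleConnected G P Q) :
    ∃ N : ℕ, 0 < N ∧ ∀ x : G ⧸ P, ∃ n : ℕ, n + 1 ≤ N ∧
      QCycleChain G P Q n ((1 : G) : G ⧸ P) x := by
  have : IsClosed (P : Set G) := hP.1
  have : IsClosed (Q : Set G) := hQ.1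
  have : CompactSpace (G ⧸ P) := hP.2
  have : CompactSpace (G ⧸ (P ⊓ Q)) := hPQ.2
  have hcover := iUnion_towerSet_eq_univ P Q hconn
  obtain ⟨m, hm⟩ := nonempty_interior_of_iUnion_of_closed (isClosed_image_towerSet P Q)
    (by rw [← image_iUnion, hcover, image_univ_of_surjective QuotientGroup.mk_surjective])
  obtain ⟨N, hN⟩ := exists_smul_eq_univ_of_monotone (towerSet_mono P Q) hcover isOpen_interior hm
  refine ⟨N + m + 1, (N + m).succ_pos, fun x => ⟨N + m, le_rfl, ?_⟩⟩
  have hx : x ∈ towerSet P Q N • (QuotientGroup.mk '' towerSet P Q m) :=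
    smul_subset_smul_left interior_subset (hN ▸ mem_univ x)
  rw [smul_image_mk, towerSet_mul_towerSet] at hx
  exact (qCycleChain_iff_mem_image_towerSet P Q _ x).mpr
    (image_mono (towerSet_mono P Q (N + m).le_succ) hx)
end

section
/- Let G be a complex semisimple Lie group, P, Q parabolic subgroups with P ∩ Q parabolic, and suppose for each k ≥ 1 the k-th Q-tower T^k_{x₀} is realized as the set of tuples (x₁,…,x_k,s₁,…,s_k) ∈ (G/P)^k × (G/Q)^k with x_{j−1}, x_j ∈ P_{s_j} for all j (x₀ fixed). Then for 1 ≤ j < k, the truncation map π_{k,j}(x₁,…,x_k,s₁,…,s_k) = (x₁,…,x_j,s₁,…,s_j) is a surjective holomorphic map T^k_{x₀} → T^j_{x₀}, and its fiber over a point (x₁,…,x_j,s₁,…,s_j) is canonically identified with the tower T^{k−j}_{x_j}; in particular T^{k−j}_{x₀} → T^k_{x₀} → T^j_{x₀} is a holomorphic fiber bundle. -/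
open scoped Pointwise

/-- The `Q`-cycle `P_s = p(q⁻¹(s)) ⊆ G ⧸ P` associated to a point `s ∈ G ⧸ Q`:
for `s = gQ` it is the translate `g • (Q • x₀)`. -/
def cycleOf (G : Type*) [Group G] (P Q : Subgroup G) (s : G ⧸ Q) : Set (G ⧸ P) :=
  {x | ∃ g : G, (QuotientGroup.mk g : G ⧸ Q) = s ∧
        x ∈ g • (MulAction.orbit Q ((1 : G) : G ⧸ P))}

/-- The `n`-th `Q`-tower at `x₀`, realized concretely as the set of tuples
`(x₁, …, xₙ, s₁, …, sₙ)` such that the `Q`-cycle `P_{s_j}` contains both `x_{j-1}`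
and `x_j` for every `j` (with the convention `x₀` fixed). -/
def TowerSet (G : Type*) [Group G] (P Q : Subgroup G) (x0 : G ⧸ P) (n : ℕ) :
    Set ((Fin n → G ⧸ P) × (Fin n → G ⧸ Q)) :=
  {t | ∀ j : Fin n, (Fin.cons x0 t.1 : Fin (n+1) → G ⧸ P) j.castSucc ∈ cycleOf G P Q (t.2 j) ∧
        (Fin.cons x0 t.1 : Fin (n+1) → G ⧸ P) j.succ ∈ cycleOf G P Q (t.2 j)}

/-- The evaluation map of the `n`-th `Q`-tower, sending `(x₁, …, xₙ, s₁, …, sₙ)` to `xₙ`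
(and to `x₀` when `n = 0`). -/
def evalTower (G : Type*) [Group G] (P Q : Subgroup G) (x0 : G ⧸ P) (n : ℕ)
    (t : (Fin n → G ⧸ P) × (Fin n → G ⧸ Q)) : G ⧸ P :=
  (Fin.cons x0 t.1 : Fin (n+1) → G ⧸ P) (Fin.last n)

/-- The truncation map `π_{k,j}` (with `k = j + d`), sending
`(x₁, …, x_k, s₁, …, s_k)` to `(x₁, …, x_j, s₁, …, s_j)`. -/
def truncTower (G : Type*) [Group G] (P Q : Subgroup G) (j d : ℕ)
    (t : (Fin (j + d) → G ⧸ P) × (Fin (j + d) → G ⧸ Q)) :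
    (Fin j → G ⧸ P) × (Fin j → G ⧸ Q) :=
  (t.1 ∘ Fin.castAdd d, t.2 ∘ Fin.castAdd d)

/-- Appending a `d`-chain tuple to a `j`-chain tuple. -/
def appendTower (G : Type*) [Group G] (P Q : Subgroup G) (j d : ℕ)
    (t : (Fin j → G ⧸ P) × (Fin j → G ⧸ Q))
    (u : (Fin d → G ⧸ P) × (Fin d → G ⧸ Q)) :
    (Fin (j + d) → G ⧸ P) × (Fin (j + d) → G ⧸ Q) :=
  (Fin.append t.1 u.1, Fin.append t.2 u.2)

/-! A tower is a chain of incidences `x_{i-1}, x_i ∈ P_{s_i}`. For a concatenated tuple this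
condition splits into the condition on the first `j` steps and the condition on the last `d`
steps started at `x_j`, which identifies the fiber of the truncation with `T^d_{x_j}`.
Fibers are nonempty because `x, x, …, x` with every `s_i = gQ` is a chain for `x = gP`. -/

namespace Fin

variable {α : Type*} {j d : ℕ}

lemma cons_append_castLE (x : α) (f : Fin j → α) (u : Fin d → α) (i : Fin (j + 1)) :
    (cons x (append f u) : Fin (j + d + 1) → α) (castLE (by omega) i) =
      (cons x f : Fin (j + 1) → α) i := by
  cases i using Fin.cases with
  | zero => rfl
  | succ i =>
    rw [show castLE (by omega) i.succ = (castAdd d i).succ from rfl, cons_succ, cons_succ,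
      append_left]

lemma cons_append_natAdd (x : α) (f : Fin j → α) (u : Fin d → α) (i : Fin (d + 1)) :
    (cons x (append f u) : Fin (j + d + 1) → α) (natAdd j i) =
      (cons ((cons x f : Fin (j + 1) → α) (last j)) u : Fin (d + 1) → α) i := by
  cases i using Fin.cases with
  | zero =>
    cases j with
    | zero => rfl
    | succ j =>
      rw [show natAdd (j + 1) (0 : Fin (d + 1)) = (castAdd d (last j)).succ from rfl,
        cons_succ, append_left, cons_zero, ← succ_last, cons_succ]
  | succ i =>
    rw [← succ_natAdd, cons_succ, cons_succ, append_right]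

end Fin

section IncidenceChain

variable {X S : Type*} (R : X → S → Prop)

/-- `R x s` reads "the point `x` lies on the cycle `s`"; consecutive points of the path
`x₀, xs 0, …, xs (n - 1)` must both lie on the cycle `ss i` joining them. -/
def IsIncidenceChain {n : ℕ} (x0 : X) (xs : Fin n → X) (ss : Fin n → S) : Prop :=
  ∀ i : Fin n, R ((Fin.cons x0 xs : Fin (n + 1) → X) i.castSucc) (ss i) ∧ R (xs i) (ss i)

variable {R}

lemma isIncidenceChain_const {n : ℕ} {x : X} {s : S} (h : R x s) :
    IsIncidenceChain R x (fun _ : Fin n => x) (fun _ => s) := by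
  intro i
  refine ⟨?_, h⟩
  cases i.castSucc using Fin.cases <;> exact h

lemma isIncidenceChain_append_iff {j d : ℕ} {x0 : X} {xs : Fin j → X} {ys : Fin d → X}
    {ss : Fin j → S} {ts : Fin d → S} :
    IsIncidenceChain R x0 (Fin.append xs ys) (Fin.append ss ts) ↔
      IsIncidenceChain R x0 xs ss ∧
        IsIncidenceChain R ((Fin.cons x0 xs : Fin (j + 1) → X) (Fin.last j)) ys ts := by
  unfold IsIncidenceChain
  rw [Fin.forall_fin_add]
  have hleft (i : Fin j) : (Fin.castAdd d i).castSucc = Fin.castLE (by omega) i.castSucc := rfl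
  have hright (i : Fin d) : (Fin.natAdd j i).castSucc = Fin.natAdd j i.castSucc := rfl
  simp only [Fin.append_left, Fin.append_right, hleft, hright, Fin.cons_append_castLE,
    Fin.cons_append_natAdd]

end IncidenceChain

section Tower

variable {G : Type*} [Group G] {P Q : Subgroup G}

def dropTower (j d : ℕ) {X S : Type*} (t : (Fin (j + d) → X) × (Fin (j + d) → S)) :
    (Fin d → X) × (Fin d → S) :=
  (t.1 ∘ Fin.natAdd j, t.2 ∘ Fin.natAdd j)

lemma appendTower_mem_towerSet_iff {x0 : G ⧸ P} {j d : ℕ}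
    {t : (Fin j → G ⧸ P) × (Fin j → G ⧸ Q)} {u : (Fin d → G ⧸ P) × (Fin d → G ⧸ Q)} :
    appendTower G P Q j d t u ∈ TowerSet G P Q x0 (j + d) ↔
      t ∈ TowerSet G P Q x0 j ∧ u ∈ TowerSet G P Q (evalTower G P Q x0 j t) d :=
  isIncidenceChain_append_iff (R := fun x s => x ∈ cycleOf G P Q s)

lemma truncTower_appendTower {j d : ℕ} (t : (Fin j → G ⧸ P) × (Fin j → G ⧸ Q))
    (u : (Fin d → G ⧸ P) × (Fin d → G ⧸ Q)) :
    truncTower G P Q j d (appendTower G P Q j d t u) = t := by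
  ext <;> simp [truncTower, appendTower]

lemma appendTower_truncTower_dropTower {j d : ℕ}
    (t : (Fin (j + d) → G ⧸ P) × (Fin (j + d) → G ⧸ Q)) :
    appendTower G P Q j d (truncTower G P Q j d t) (dropTower j d t) = t :=
  Prod.ext Fin.append_castAdd_natAdd Fin.append_castAdd_natAdd

lemma mem_towerSet_add_iff {x0 : G ⧸ P} {j d : ℕ}
    {u : (Fin (j + d) → G ⧸ P) × (Fin (j + d) → G ⧸ Q)} :
    u ∈ TowerSet G P Q x0 (j + d) ↔ truncTower G P Q j d u ∈ TowerSet G P Q x0 j ∧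
      dropTower j d u ∈ TowerSet G P Q (evalTower G P Q x0 j (truncTower G P Q j d u)) d := by
  conv_lhs => rw [← appendTower_truncTower_dropTower u]
  exact appendTower_mem_towerSet_iff

lemma dropTower_appendTower {j d : ℕ} (t : (Fin j → G ⧸ P) × (Fin j → G ⧸ Q)) :
    Function.LeftInverse (dropTower j d) (appendTower G P Q j d t) := by
  intro u
  ext <;> simp [appendTower, dropTower]

lemma self_mem_cycleOf (g : G) :
    (QuotientGroup.mk g : G ⧸ P) ∈ cycleOf G P Q (QuotientGroup.mk g : G ⧸ Q) :=
  ⟨g, rfl, (1 : G), MulAction.mem_orbit_self _, by simp [MulAction.Quotient.smul_mk]⟩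

lemma towerSet_nonempty (x : G ⧸ P) (n : ℕ) : (TowerSet G P Q x n).Nonempty := by
  obtain ⟨g, rfl⟩ := QuotientGroup.mk_surjective x
  exact ⟨(_, _),
    isIncidenceChain_const (R := fun x s => x ∈ cycleOf G P Q s) (self_mem_cycleOf g)⟩

lemma continuous_truncTower [TopologicalSpace G] (j d : ℕ) :
    Continuous (truncTower G P Q j d) := by
  unfold truncTower
  fun_prop

end Tower

theorem stmt16_general (G : Type*) [Group G] [TopologicalSpace G]
    (P Q : Subgroup G)
    (x0 : G ⧸ P) (j d : ℕ) :
    Continuous (truncTower G P Q j d) ∧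
      Set.MapsTo (truncTower G P Q j d) (TowerSet G P Q x0 (j + d)) (TowerSet G P Q x0 j) ∧
      Set.SurjOn (truncTower G P Q j d) (TowerSet G P Q x0 (j + d)) (TowerSet G P Q x0 j) ∧
      ∀ t ∈ TowerSet G P Q x0 j,
        Set.BijOn (appendTower G P Q j d t)
          (TowerSet G P Q (evalTower G P Q x0 j t) d)
          {u ∈ TowerSet G P Q x0 (j + d) | truncTower G P Q j d u = t} := by
  refine ⟨continuous_truncTower j d, fun u hu => ?_, fun t ht => ?_, fun t ht => ⟨?_, ?_, ?_⟩⟩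
  · exact (mem_towerSet_add_iff.1 hu).1
  · obtain ⟨u, hu⟩ := towerSet_nonempty (Q := Q) (evalTower G P Q x0 j t) d
    exact ⟨appendTower G P Q j d t u, appendTower_mem_towerSet_iff.2 ⟨ht, hu⟩,
      truncTower_appendTower t u⟩
  · exact fun u hu => ⟨appendTower_mem_towerSet_iff.2 ⟨ht, hu⟩, truncTower_appendTower t u⟩
  · exact (dropTower_appendTower t).injective.injOn
  · rintro u ⟨hu, rfl⟩
    exact ⟨dropTower j d u, (mem_towerSet_add_iff.1 hu).2, appendTower_truncTower_dropTower u⟩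

/-- For `1 ≤ j < k`, `k = j + d`, the truncation `π_{k,j} : T^k_{x₀} → T^j_{x₀}` is a
holomorphic (here: continuous) surjection, and its fiber over a point `t ∈ T^j_{x₀}` is
canonically identified, via appending, with the tower `T^d_{x_j}` based at the evaluation
point of `t`; in particular `T^d → T^k_{x₀} → T^j_{x₀}` is a fiber bundle. -/
theorem stmt16 (G : Type*) [Group G] [TopologicalSpace G] [IsTopologicalGroup G]
    (P Q : Subgroup G)
    (hP : IsParabolic G P) (hQ : IsParabolic G Q) (hPQ : IsParabolic G (P ⊓ Q))
    (x0 : G ⧸ P) (hx0 : x0 = ((1 : G) : G ⧸ P)) (j d : ℕ) (hd : 0 < d) :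
    Continuous (truncTower G P Q j d) ∧
      Set.MapsTo (truncTower G P Q j d) (TowerSet G P Q x0 (j + d)) (TowerSet G P Q x0 j) ∧
      Set.SurjOn (truncTower G P Q j d) (TowerSet G P Q x0 (j + d)) (TowerSet G P Q x0 j) ∧
      ∀ t ∈ TowerSet G P Q x0 j,
        Set.BijOn (appendTower G P Q j d t)
          (TowerSet G P Q (evalTower G P Q x0 j t) d)
          {u ∈ TowerSet G P Q x0 (j + d) | truncTower G P Q j d u = t} :=
  stmt16_general G P Q x0 j d
end

section
/- Let G be a complex semisimple Lie group, P, Q parabolic subgroups with P ∩ Q parabolic, and define the relation x ≈ y on G/P by: the set of s ∈ G/Q with x ∈ P_s equals the set of s with y ∈ P_s (i.e., Q_x = Q_y, where Q_x = q(p⁻¹(x))). Then ≈ is a G-equivariant equivalence relation, it holds iff ⋂_{x∈P_s} P_s = ⋂_{y∈P_s} P_s, and the quotient of G/P by ≈ is a rational homogeneous space G/P̃ where P̃ ⊇ P is the parabolic subgroup stabilizing the class of the base point (the reduction of P mod Q). -/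
/-! The `P`-cycle `Q_x = q(p⁻¹ x)` is `G`-equivariant, so `Q_{gP} = g • Q_{x₀}` and `gP ≈ hP`
holds exactly when `g` and `h` differ by an element of the stabilizer `P̃` of `Q_{x₀}`: the
orbit–stabilizer bijection identifies `(G ⧸ P)/≈` with `G ⧸ P̃`. The set `Q_{x₀}` is closed, being
the image of the compact fibre `p⁻¹(x₀) ⊆ G ⧸ (P ∩ Q)` in the Hausdorff space `G ⧸ Q`, hence so
is its stabilizer `P̃`; and `G ⧸ P̃` is compact as a continuous image of `G ⧸ P`. -/

open scoped Pointwise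

/-- The `P`-cycle `Q_x = q(p⁻¹(x)) ⊆ G ⧸ Q` of `x ∈ G ⧸ P`: it parametrizes the
`Q`-cycles through `x`. -/
def Pcyc (G : Type*) [Group G] (P Q : Subgroup G) (x : G ⧸ P) : Set (G ⧸ Q) :=
  {s | x ∈ cycleOf G P Q s}

theorem Set.setOf_mem_eq_iff_biInter_eq {ι α : Type*} (C : ι → Set α) (x y : α) :
    {i | x ∈ C i} = {i | y ∈ C i} ↔
      (⋂ i ∈ {i | x ∈ C i}, C i) = ⋂ i ∈ {i | y ∈ C i}, C i := by
  refine ⟨fun h => by rw [h], fun h => ?_⟩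
  have hx : x ∈ ⋂ i ∈ {i | y ∈ C i}, C i := h ▸ Set.mem_iInter₂.mpr fun _ hi => hi
  have hy : y ∈ ⋂ i ∈ {i | x ∈ C i}, C i := h.symm ▸ Set.mem_iInter₂.mpr fun _ hi => hi
  exact Set.Subset.antisymm (fun i hi => Set.mem_iInter₂.mp hy i hi)
    fun i hi => Set.mem_iInter₂.mp hx i hi

theorem MulAction.isClosed_stabilizer_set {M X : Type*} [Group M] [TopologicalSpace M]
    [ContinuousInv M] [TopologicalSpace X] [MulAction M X] [ContinuousSMul M X] {s : Set X}
    (hs : IsClosed s) : IsClosed (stabilizer M s : Set M) := by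
  set T : Set M := {g | g • s ⊆ s}
  have hT : IsClosed T := by
    simp only [T, Set.smul_set_subset_iff, Set.ofPred_forall]
    exact isClosed_biInter fun b _ => hs.preimage (continuous_id.smul continuous_const)
  have hstab : (stabilizer M s : Set M) = T ∩ Inv.inv ⁻¹' T := by
    ext g
    simp only [SetLike.mem_coe, mem_stabilizer_iff, Set.mem_inter_iff, Set.mem_preimage,
      Set.mem_ofPred_eq, T, ← Set.subset_smul_set_iff]
    exact Set.Subset.antisymm_iff
  rw [hstab]
  exact hT.inter (hT.preimage continuous_inv)

theorem Subgroup.continuous_quotientMapOfLE {G : Type*} [Group G] [TopologicalSpace G]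
    {H K : Subgroup G} (hHK : H ≤ K) : Continuous (Subgroup.quotientMapOfLE hHK) :=
  (QuotientGroup.isQuotientMap_mk H).continuous_iff.mpr QuotientGroup.continuous_mk

theorem Subgroup.surjective_quotientMapOfLE {G : Type*} [Group G] {H K : Subgroup G}
    (hHK : H ≤ K) : Function.Surjective (quotientMapOfLE hHK) :=
  Function.Surjective.of_comp (g := QuotientGroup.mk) QuotientGroup.mk_surjective

section Cycles

variable {G : Type*} [Group G] (P Q : Subgroup G)

theorem mem_cycleOf_iff (s : G ⧸ Q) (x : G ⧸ P) :
    x ∈ cycleOf G P Q s ↔ ∃ g : G, (g : G ⧸ Q) = s ∧ (g : G ⧸ P) = x := by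
  constructor
  · rintro ⟨g, rfl, _, ⟨q, rfl⟩, rfl⟩
    refine ⟨g * q, QuotientGroup.mk_mul_of_mem g q.2, ?_⟩
    show _ = g • ((q : G) • ((1 : G) : G ⧸ P))
    simp
  · rintro ⟨g, rfl, rfl⟩
    exact ⟨g, rfl, _, MulAction.mem_orbit_self _, by simp⟩

theorem mem_pcyc_iff (x : G ⧸ P) (s : G ⧸ Q) :
    s ∈ Pcyc G P Q x ↔ ∃ g : G, (g : G ⧸ Q) = s ∧ (g : G ⧸ P) = x :=
  mem_cycleOf_iff P Q s x

theorem pcyc_eq_image_preimage (x : G ⧸ P) :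
    Pcyc G P Q x = Subgroup.quotientMapOfLE (inf_le_right : P ⊓ Q ≤ Q) ''
      (Subgroup.quotientMapOfLE (inf_le_left : P ⊓ Q ≤ P) ⁻¹' {x}) := by
  ext s
  simp only [mem_pcyc_iff, Set.mem_image, Set.mem_preimage, Set.mem_singleton_iff]
  constructor
  · rintro ⟨g, hs, hx⟩
    exact ⟨g, hx, hs⟩
  · rintro ⟨z, hx, hs⟩
    induction z using QuotientGroup.induction_on with
    | H g => exact ⟨g, hs, hx⟩

theorem pcyc_smul (g : G) (x : G ⧸ P) : Pcyc G P Q (g • x) = g • Pcyc G P Q x := by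
  ext s
  simp only [Set.mem_smul_set_iff_inv_smul_mem, mem_pcyc_iff]
  constructor
  · rintro ⟨h, rfl, hx⟩
    refine ⟨g⁻¹ * h, rfl, ?_⟩
    rw [← smul_eq_mul, ← MulAction.Quotient.smul_coe, hx, inv_smul_smul]
  · rintro ⟨h, hs, rfl⟩
    refine ⟨g * h, ?_, rfl⟩
    rw [← smul_eq_mul, ← MulAction.Quotient.smul_coe, hs, smul_inv_smul]

theorem pcyc_mk (g : G) : Pcyc G P Q (g : G ⧸ P) = g • Pcyc G P Q ((1 : G) : G ⧸ P) := by
  rw [← pcyc_smul, MulAction.Quotient.smul_coe, smul_eq_mul, mul_one]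

theorem le_stabilizer_pcyc_one : P ≤ MulAction.stabilizer G (Pcyc G P Q ((1 : G) : G ⧸ P)) :=
  fun p hp => by
    rw [MulAction.mem_stabilizer_iff, ← pcyc_smul,
      MulAction.mem_stabilizer_iff.mp ((MulAction.stabilizer_quotient P).ge hp)]

theorem mk_eq_mk_iff_pcyc_eq (g h : G) :
    (g : G ⧸ MulAction.stabilizer G (Pcyc G P Q ((1 : G) : G ⧸ P))) = h ↔
      Pcyc G P Q (g : G ⧸ P) = Pcyc G P Q (h : G ⧸ P) := by
  rw [pcyc_mk P Q g, pcyc_mk P Q h]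
  exact (MulAction.injective_ofQuotientStabilizer G _).eq_iff.symm

theorem isClosed_pcyc [TopologicalSpace G] [IsTopologicalGroup G] (hP : IsClosed (P : Set G))
    (hQ : IsClosed (Q : Set G)) [CompactSpace (G ⧸ (P ⊓ Q))] (x : G ⧸ P) :
    IsClosed (Pcyc G P Q x) := by
  rw [pcyc_eq_image_preimage]
  exact ((isClosed_singleton.preimage (Subgroup.continuous_quotientMapOfLE _)).isCompact.image
    (Subgroup.continuous_quotientMapOfLE _)).isClosed

end Cycles

theorem IsParabolic.of_le {G : Type*} [Group G] [TopologicalSpace G] {H K : Subgroup G}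
    (hH : IsParabolic G H) (hHK : H ≤ K) (hK : IsClosed (K : Set G)) : IsParabolic G K :=
  have := hH.2
  ⟨hK, (Subgroup.surjective_quotientMapOfLE hHK).compactSpace
    (Subgroup.continuous_quotientMapOfLE hHK)⟩

/-- The relation `x ≈ y ⟺ Q_x = Q_y` on `G ⧸ P` is a `G`-equivariant equivalence
relation, it holds iff `⋂_{x ∈ P_s} P_s = ⋂_{y ∈ P_s} P_s`, and the quotient of `G ⧸ P`
by `≈` is the rational homogeneous space `G ⧸ P̃`, where `P̃ ⊇ P` is the parabolic
subgroup stabilizing the class of the base point (the reduction of `P` mod `Q`). -/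
theorem stmt19 (G : Type*) [Group G] [TopologicalSpace G] [IsTopologicalGroup G]
    (P Q : Subgroup G)
    (hP : IsParabolic G P) (hQ : IsParabolic G Q) (hPQ : IsParabolic G (P ⊓ Q))
    (P' : Subgroup G)
    (hP' : P' = MulAction.stabilizer G (Pcyc G P Q ((1 : G) : G ⧸ P))) :
    -- `≈` is `G`-equivariant (it is an equivalence relation since it is an equality):
    (∀ (g : G) (x y : G ⧸ P),
        Pcyc G P Q x = Pcyc G P Q y ↔ Pcyc G P Q (g • x) = Pcyc G P Q (g • y)) ∧
    -- `x ≈ y` iff the intersections of all `Q`-cycles through `x` resp. `y` agree: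
    (∀ x y : G ⧸ P,
        Pcyc G P Q x = Pcyc G P Q y ↔
          (⋂ s ∈ Pcyc G P Q x, cycleOf G P Q s) = ⋂ s ∈ Pcyc G P Q y, cycleOf G P Q s) ∧
    -- `P̃` is a parabolic subgroup containing `P`:
    P ≤ P' ∧ IsParabolic G P' ∧
    -- the quotient of `G ⧸ P` by `≈` is `G ⧸ P̃`:
    (∀ g h : G, (QuotientGroup.mk g : G ⧸ P') = QuotientGroup.mk h ↔
        Pcyc G P Q ((QuotientGroup.mk g : G ⧸ P)) = Pcyc G P Q (QuotientGroup.mk h)) := by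
  subst hP'
  have := hPQ.2
  refine ⟨fun g x y => ?_, fun x y => Set.setOf_mem_eq_iff_biInter_eq (cycleOf G P Q) x y,
    le_stabilizer_pcyc_one P Q, ?_, mk_eq_mk_iff_pcyc_eq P Q⟩
  · rw [pcyc_smul, pcyc_smul, smul_left_cancel_iff]
  · exact hP.of_le (le_stabilizer_pcyc_one P Q)
      (MulAction.isClosed_stabilizer_set (isClosed_pcyc P Q hP.1 hQ.1 _))
end
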